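/- Under Assumption 1 and with θ̂ > 0, the dissipated energy along one flow from the post-jump section to the jump set grows unboundedly with the post-jump velocity: Diss(v) = E((θ̂, v)) − E(exp(τ((θ̂, v)) A) · (θ̂, v)) → +∞ as v → +∞. Consequently there exists v > 0 with P(v) < v. -/

import Mathlib

/-- The system matrix `A = ![![0, 1], ![-k/m, -c/m]]`. -/
noncomputable def Amat (m c k : ℝ) : Matrix (Fin 2) (Fin 2) ℝ :=
  ![![0, 1], ![-k/m, -c/m]]

/-- The flow map `x ↦ exp(t A) x` (matrix exponential). -/
noncomputable def flow (m c k : ℝ) (t : ℝ) (x : Fin 2 → ℝ) : Fin 2 → ℝ :=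
  (NormedSpace.exp (t • Amat m c k)).mulVec x

/-- The total mechanical energy `E(x) = (1/2)·m·x₂² + (1/2)·k·x₁²`. -/
noncomputable def energy (m k : ℝ) (x : Fin 2 → ℝ) : ℝ :=
  (1 / 2) * m * (x 1) ^ 2 + (1 / 2) * k * (x 0) ^ 2

/-- `τ` is the first-hitting-time map of the jump set `D = {x : x₁ = 0}`:
for every `x ≠ 0`, `τ x` is the least `t > 0` with `(exp(t A) x)₁ = 0`. -/
def IsFirstHittingTime (m c k : ℝ) (τ : (Fin 2 → ℝ) → ℝ) : Prop :=
  ∀ x : Fin 2 → ℝ, x ≠ 0 → IsLeast {t : ℝ | 0 < t ∧ flow m c k t x 0 = 0} (τ x)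

/-- The half-return map `P(v) = −(exp(τ((θ̂, v)) A) · (θ̂, v))₂`. -/
noncomputable def halfReturn (m c k θ : ℝ) (τ : (Fin 2 → ℝ) → ℝ) (v : ℝ) : ℝ :=
  -(flow m c k (τ ![θ, v]) ![θ, v] 1)

/-- The dissipated energy `Diss(v) = E((θ̂, v)) − E(exp(τ((θ̂, v)) A)·(θ̂, v))`. -/
noncomputable def diss (m c k θ : ℝ) (τ : (Fin 2 → ℝ) → ℝ) (v : ℝ) : ℝ :=
  energy m k ![θ, v] - energy m k (flow m c k (τ ![θ, v]) ![θ, v])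

section aux
attribute [local instance] Matrix.linftyOpNormedRing Matrix.linftyOpNormedAlgebra
  Matrix.linftyOpNormedAddCommGroup

lemma flow_hasDerivAt (m c k : ℝ) (x0 : Fin 2 → ℝ) (t : ℝ) (i : Fin 2) :
    HasDerivAt (fun s : ℝ => flow m c k s x0 i)
      ((Amat m c k).mulVec (flow m c k t x0) i) t := by
  have h1 := hasDerivAt_exp_smul_const' (𝕂 := ℝ) (Amat m c k) t
  let L : Matrix (Fin 2) (Fin 2) ℝ →ₗ[ℝ] ℝ :=
    { toFun := fun M => M.mulVec x0 i
      map_add' := fun M N => by simp [Matrix.add_mulVec]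
      map_smul' := fun r M => by simp [Matrix.smul_mulVec] }
  have h2 := (L.toContinuousLinearMap.hasFDerivAt
      (x := NormedSpace.exp (t • Amat m c k))).comp_hasDerivAt t h1
  refine h2.congr_deriv ?_
  simp only [L, flow, LinearMap.coe_toContinuousLinearMap', LinearMap.coe_mk, AddHom.coe_mk, Matrix.mulVec_mulVec]
  rfl

end aux

lemma flow_zero (m c k : ℝ) (x0 : Fin 2 → ℝ) : flow m c k 0 x0 = x0 := by
  simp [flow]

lemma Amat_mulVec (m c k : ℝ) (y : Fin 2 → ℝ) :
    (Amat m c k).mulVec y = ![y 1, -(k/m) * y 0 - (c/m) * y 1] := by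
  funext i
  fin_cases i <;>
    simp [Amat, Matrix.mulVec, dotProduct, Fin.sum_univ_two] <;> ring

lemma flow_hasDerivAt0 (m c k : ℝ) (x0 : Fin 2 → ℝ) (t : ℝ) :
    HasDerivAt (fun s : ℝ => flow m c k s x0 0) (flow m c k t x0 1) t := by
  have h := flow_hasDerivAt m c k x0 t 0
  rwa [Amat_mulVec] at h

lemma flow_hasDerivAt1 (m c k : ℝ) (x0 : Fin 2 → ℝ) (t : ℝ) :
    HasDerivAt (fun s : ℝ => flow m c k s x0 1)
      (-(k/m) * flow m c k t x0 0 - (c/m) * flow m c k t x0 1) t := by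
  have h := flow_hasDerivAt m c k x0 t 1
  rwa [Amat_mulVec] at h

/-- Derivative of the energy along the flow. -/
lemma energy_hasDerivAt (m c k : ℝ) (hm : m ≠ 0) (x0 : Fin 2 → ℝ) (t : ℝ) :
    HasDerivAt (fun s : ℝ => energy m k (flow m c k s x0))
      (-c * (flow m c k t x0 1) ^ 2) t := by
  have h := ((((flow_hasDerivAt1 m c k x0 t).pow 2).const_mul ((1:ℝ)/2 * m)).add
      (((flow_hasDerivAt0 m c k x0 t).pow 2).const_mul ((1:ℝ)/2 * k)))
  have hfun : (fun s : ℝ => energy m k (flow m c k s x0)) =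
      fun s : ℝ => (1:ℝ)/2 * m * (flow m c k s x0 1) ^ 2
        + (1:ℝ)/2 * k * (flow m c k s x0 0) ^ 2 := by
    funext s; simp [energy]
  rw [hfun]
  refine h.congr_deriv ?_
  field_simp
  ring

set_option maxHeartbeats 1000000 in
/-- Key quantitative estimate. -/
lemma key_bound (m c k θ : ℝ) (hm : 0 < m) (hc : 0 < c) (hk : 0 < k) (hθ : 0 < θ)
    (τ : (Fin 2 → ℝ) → ℝ) (hτ : IsFirstHittingTime m c k τ)
    (v : ℝ) (hv : max 1 (θ * Real.sqrt (k/m)) ≤ v) :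
    c * (1 / (2 * (k/m * Real.sqrt (2*m/k) + c/m * Real.sqrt 2))) / 4 * v ^ 2
      ≤ diss m c k θ τ v := by
  set C₁ : ℝ := k/m * Real.sqrt (2*m/k) + c/m * Real.sqrt 2 with hC₁
  have hC₁pos : 0 < C₁ := by
    have : 0 < Real.sqrt 2 := by positivity
    have : 0 < Real.sqrt (2*m/k) := Real.sqrt_pos.mpr (by positivity)
    positivity
  set t₀ : ℝ := 1 / (2 * C₁) with ht₀
  have ht₀pos : 0 < t₀ := by positivity
  have hv1 : (1:ℝ) ≤ v := le_trans (le_max_left _ _) hv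
  have hv2 : θ * Real.sqrt (k/m) ≤ v := le_trans (le_max_right _ _) hv
  have hv0 : 0 < v := lt_of_lt_of_le one_pos hv1
  set x0 : Fin 2 → ℝ := ![θ, v] with hx0
  have hx00 : x0 0 = θ := rfl
  have hx01 : x0 1 = v := rfl
  set X : ℝ → Fin 2 → ℝ := fun t => flow m c k t x0 with hX
  have hX0 : X 0 = x0 := flow_zero m c k x0
  -- initial energy bound
  have hE0 : energy m k x0 = 1/2 * m * v^2 + 1/2 * k * θ^2 := by
    simp [energy, hx00, hx01]
  have hkθ : k * θ^2 ≤ m * v^2 := by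
    have hsq : (θ * Real.sqrt (k/m))^2 ≤ v^2 := by
      have h0 : 0 ≤ θ * Real.sqrt (k/m) := by positivity
      nlinarith
    rw [mul_pow, Real.sq_sqrt (by positivity : (0:ℝ) ≤ k/m)] at hsq
    have := mul_le_mul_of_nonneg_left hsq hm.le
    field_simp at this
    nlinarith
  -- energy is antitone on [0, ∞)
  have hEanti : AntitoneOn (fun t => energy m k (X t)) (Set.Ici (0:ℝ)) := by
    apply antitoneOn_of_deriv_nonpos (convex_Ici 0)
    · exact fun t _ => (energy_hasDerivAt m c k hm.ne' x0 t).continuousAt.continuousWithinAt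
    · exact fun t _ => (energy_hasDerivAt m c k hm.ne' x0 t).differentiableAt.differentiableWithinAt
    · intro t _
      rw [(energy_hasDerivAt m c k hm.ne' x0 t).deriv]
      nlinarith [sq_nonneg (X t 1)]
  have hEle : ∀ t : ℝ, 0 ≤ t → energy m k (X t) ≤ m * v^2 := by
    intro t ht
    have h' : energy m k (X t) ≤ energy m k (X 0) := hEanti (Set.self_mem_Ici) ht ht
    rw [hX0, hE0] at h'
    nlinarith
  -- a priori bounds on the trajectory
  have hb0 : ∀ t : ℝ, 0 ≤ t → |X t 0| ≤ Real.sqrt (2*m/k) * v := by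
    intro t ht
    have hE := hEle t ht
    have hterm : 1/2 * k * (X t 0)^2 ≤ m * v^2 := by
      have : 0 ≤ 1/2 * m * (X t 1)^2 := by positivity
      simp only [energy] at hE; nlinarith
    have hsq : (X t 0)^2 ≤ (Real.sqrt (2*m/k) * v)^2 := by
      rw [mul_pow, Real.sq_sqrt (by positivity : (0:ℝ) ≤ 2*m/k)]
      rw [div_mul_eq_mul_div, le_div_iff₀ hk]
      nlinarith
    calc |X t 0| = Real.sqrt ((X t 0)^2) := (Real.sqrt_sq_eq_abs _).symm
      _ ≤ Real.sqrt ((Real.sqrt (2*m/k) * v)^2) := Real.sqrt_le_sqrt hsq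
      _ = Real.sqrt (2*m/k) * v := Real.sqrt_sq (by positivity)
  have hb1 : ∀ t : ℝ, 0 ≤ t → |X t 1| ≤ Real.sqrt 2 * v := by
    intro t ht
    have hE := hEle t ht
    have hterm : 1/2 * m * (X t 1)^2 ≤ m * v^2 := by
      have : 0 ≤ 1/2 * k * (X t 0)^2 := by positivity
      simp only [energy] at hE; nlinarith
    have hsq : (X t 1)^2 ≤ (Real.sqrt 2 * v)^2 := by
      rw [mul_pow, Real.sq_sqrt (by norm_num : (0:ℝ) ≤ 2)]
      nlinarith
    calc |X t 1| = Real.sqrt ((X t 1)^2) := (Real.sqrt_sq_eq_abs _).symm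
      _ ≤ Real.sqrt ((Real.sqrt 2 * v)^2) := Real.sqrt_le_sqrt hsq
      _ = Real.sqrt 2 * v := Real.sqrt_sq (by positivity)
  -- lower bound on the derivative of the velocity
  have hdlb : ∀ t : ℝ, 0 ≤ t → -(C₁ * v) ≤ -(k/m) * X t 0 - (c/m) * X t 1 := by
    intro t ht
    obtain ⟨h0l, h0r⟩ := abs_le.mp (hb0 t ht)
    obtain ⟨h1l, h1r⟩ := abs_le.mp (hb1 t ht)
    have hkm : (0:ℝ) ≤ k/m := by positivity
    have hcm : (0:ℝ) ≤ c/m := by positivity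
    have e1 : -(k/m) * X t 0 ≥ -(k/m * (Real.sqrt (2*m/k) * v)) := by nlinarith
    have e2 : -(c/m) * X t 1 ≥ -(c/m * (Real.sqrt 2 * v)) := by nlinarith
    rw [hC₁]; nlinarith
  -- lower bound on the velocity on [0, t₀]
  have hg : ∀ t : ℝ, HasDerivAt (fun s => X s 1 + (C₁*v) * s)
      ((-(k/m) * X t 0 - (c/m) * X t 1) + C₁*v) t := by
    intro t
    have h := (flow_hasDerivAt1 m c k x0 t).add ((hasDerivAt_id t).const_mul (C₁*v))
    simpa [mul_one, hX, Pi.add_def] using h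
  have hgmono : MonotoneOn (fun t => X t 1 + (C₁*v) * t) (Set.Ici (0:ℝ)) := by
    apply monotoneOn_of_deriv_nonneg (convex_Ici 0)
    · exact fun t _ => (hg t).continuousAt.continuousWithinAt
    · exact fun t _ => (hg t).differentiableAt.differentiableWithinAt
    · intro t ht
      rw [(hg t).deriv]
      rw [interior_Ici] at ht
      have := hdlb t (le_of_lt ht)
      linarith
  have hXlb : ∀ t : ℝ, 0 ≤ t → t ≤ t₀ → v/2 ≤ X t 1 := by
    intro t ht1 ht2
    have h' : X 0 1 + C₁ * v * 0 ≤ X t 1 + C₁ * v * t := hgmono Set.self_mem_Ici ht1 ht1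
    have hX01 : X 0 1 = v := by rw [hX0]; exact hx01
    have hCt : C₁ * v * t ≤ v/2 := by
      have : C₁ * v * t ≤ C₁ * v * t₀ := by
        apply mul_le_mul_of_nonneg_left ht2 (by positivity)
      rw [ht₀] at this
      have hC₁ne : C₁ ≠ 0 := hC₁pos.ne'
      calc C₁ * v * t ≤ C₁ * v * (1/(2*C₁)) := this
        _ = v/2 := by field_simp
    rw [hX01] at h'
    clear_value t₀ C₁ X x0
    linarith
  -- the hitting time is at least t₀
  have hx0ne : x0 ≠ 0 := by
    intro h
    have := congrFun h 0
    rw [hx00] at this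
    exact hθ.ne' this
  obtain ⟨⟨hTpos, hT0⟩, hTlb⟩ := hτ x0 hx0ne
  set T : ℝ := τ x0 with hT
  have ht₀T : t₀ ≤ T := by
    by_contra hcon
    push_neg at hcon
    have hmono0 : MonotoneOn (fun t => X t 0) (Set.Icc 0 T) := by
      apply monotoneOn_of_deriv_nonneg (convex_Icc 0 T)
      · exact fun t _ => (flow_hasDerivAt0 m c k x0 t).continuousAt.continuousWithinAt
      · exact fun t _ => (flow_hasDerivAt0 m c k x0 t).differentiableAt.differentiableWithinAt
      · intro t ht
        rw [(flow_hasDerivAt0 m c k x0 t).deriv]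
        rw [interior_Icc] at ht
        have := hXlb t ht.1.le (le_trans ht.2.le hcon.le)
        linarith
    have h' : X 0 0 ≤ X T 0 := hmono0 (Set.mem_Icc.mpr ⟨le_refl 0, hTpos.le⟩)
      (Set.mem_Icc.mpr ⟨hTpos.le, le_refl T⟩) hTpos.le
    have hX00 : X 0 0 = θ := by rw [hX0]; exact hx00
    have hT0' : X T 0 = 0 := hT0
    rw [hX00, hT0'] at h'
    linarith
  -- energy decay on [0, t₀]
  have hh : ∀ t : ℝ, HasDerivAt (fun s => energy m k (X s) + (c*v^2/4) * s)
      (-c * (X t 1)^2 + c*v^2/4) t := by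
    intro t
    have h := (energy_hasDerivAt m c k hm.ne' x0 t).add
      ((hasDerivAt_id t).const_mul (c*v^2/4))
    simpa [mul_one, hX, Pi.add_def] using h
  have hanti2 : AntitoneOn (fun t => energy m k (X t) + (c*v^2/4) * t)
      (Set.Icc 0 t₀) := by
    apply antitoneOn_of_deriv_nonpos (convex_Icc 0 t₀)
    · exact fun t _ => (hh t).continuousAt.continuousWithinAt
    · exact fun t _ => (hh t).differentiableAt.differentiableWithinAt
    · intro t ht
      rw [(hh t).deriv]
      rw [interior_Icc] at ht
      have hvb := hXlb t ht.1.le ht.2.le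
      have hsq : v^2/4 ≤ X t 1^2 := by nlinarith
      linarith [mul_le_mul_of_nonneg_left hsq hc.le]
  have hdecay : energy m k (X t₀) + c*v^2/4 * t₀ ≤ energy m k x0 := by
    have h' : energy m k (X t₀) + c*v^2/4 * t₀ ≤ energy m k (X 0) + c*v^2/4 * 0 :=
      hanti2 (Set.mem_Icc.mpr ⟨le_refl 0, ht₀pos.le⟩)
        (Set.mem_Icc.mpr ⟨ht₀pos.le, le_refl t₀⟩) ht₀pos.le
    rw [hX0] at h'
    linarith
  have hfinal : energy m k (X T) ≤ energy m k (X t₀) :=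
    hEanti (Set.mem_Ici.mpr ht₀pos.le) (Set.mem_Ici.mpr (le_trans ht₀pos.le ht₀T)) ht₀T
  have hdiss : diss m c k θ τ v = energy m k x0 - energy m k (X T) := rfl
  rw [hdiss]
  calc c * t₀ / 4 * v^2 = c * v^2/4 * t₀ := by ring
    _ ≤ energy m k x0 - energy m k (X t₀) := by linarith
    _ ≤ energy m k x0 - energy m k (X T) := by linarith


/-- under Assumption 1 and `θ̂ > 0`, the dissipated energy grows
unboundedly with the post-jump velocity, `Diss(v) → +∞` as `v → +∞`, and
consequently there exists `v > 0` with `P(v) < v`. -/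
theorem stmt9 (m c k θ : ℝ) (hm : 0 < m) (hc : 0 < c) (hk : 0 < k)
    (hud : c ^ 2 < 4 * k * m) (hθ : 0 < θ)
    (τ : (Fin 2 → ℝ) → ℝ) (hτ : IsFirstHittingTime m c k τ) :
    Filter.Tendsto (diss m c k θ τ) Filter.atTop Filter.atTop ∧
    ∃ v : ℝ, 0 < v ∧ halfReturn m c k θ τ v < v := by
  set C₁ : ℝ := k/m * Real.sqrt (2*m/k) + c/m * Real.sqrt 2 with hC₁
  have hC₁pos : 0 < C₁ := by
    have : 0 < Real.sqrt 2 := by positivity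
    have : 0 < Real.sqrt (2*m/k) := Real.sqrt_pos.mpr (by positivity)
    positivity
  have hconst : 0 < c * (1 / (2 * C₁)) / 4 := by positivity
  have htend : Filter.Tendsto (diss m c k θ τ) Filter.atTop Filter.atTop := by
    apply Filter.tendsto_atTop_mono' _ _
      ((Filter.tendsto_pow_atTop (two_ne_zero)).const_mul_atTop hconst)
    filter_upwards [Filter.eventually_ge_atTop (max 1 (θ * Real.sqrt (k/m)))] with v hv
    exact key_bound m c k θ hm hc hk hθ τ hτ v hv
  refine ⟨htend, ?_⟩
  have hev := (htend.eventually_ge_atTop (1/2 * k * θ^2 + 1)).and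
    (Filter.eventually_ge_atTop (1:ℝ))
  obtain ⟨v, hdv, hv1⟩ := hev.exists
  have hv0 : 0 < v := lt_of_lt_of_le one_pos hv1
  refine ⟨v, hv0, ?_⟩
  have hx0ne : (![θ, v] : Fin 2 → ℝ) ≠ 0 := by
    intro h
    have := congrFun h 0
    simp at this
    exact hθ.ne' this
  obtain ⟨⟨hTpos, hT0⟩, hTlb⟩ := hτ ![θ, v] hx0ne
  set y : Fin 2 → ℝ := flow m c k (τ ![θ, v]) ![θ, v] with hy
  have hEy : energy m k y = 1/2 * m * (y 1)^2 := by
    simp [energy, hT0]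
  have hE0 : energy m k ![θ, v] = 1/2 * m * v^2 + 1/2 * k * θ^2 := by
    simp [energy]
  have hd : diss m c k θ τ v = (1/2 * m * v^2 + 1/2 * k * θ^2) - 1/2 * m * (y 1)^2 := by
    rw [diss, hE0, hEy]
  rw [hd] at hdv
  have hsq : (y 1)^2 < v^2 := by nlinarith
  have : halfReturn m c k θ τ v = -(y 1) := rfl
  rw [this]
  nlinarith [sq_nonneg (y 1 + v)]
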